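/- arXiv:0810.3209 — 6 statements merged into one kernel-verified Lean document; each statement's English description precedes it below -/
import Mathlib

section
/- Let X be a finite set and 𝓘 a non-empty family of subsets of X such that for all A, B ∈ 𝓘, either A ∩ B ∈ 𝓘 or A ∪ B ∈ 𝓘. Then the Euler characteristic χ(𝓘) := ∑_{l≥1} ∑_{chains C₁ ⊊ ⋯ ⊊ C_l, all C_i ∈ 𝓘} (-1)^{l-1} equals 1. -/
/-!
Toggling a fixed member `m` in and out of chains changes the length by one, so any set of
chains that is closed under this toggling contributes nothing to the alternating sum.

Pick `M ∈ 𝓘` of maximal size. For `C ∈ 𝓘`, the alternative `C ∪ M ∈ 𝓘` forces `C ⊆ M`, so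
`C ∩ M ∈ 𝓘` in any case. Deleting a smallest member `C ⊄ M` does not change `χ`: every member
strictly below `C` lies in `M`, hence in `C ∩ M`, so `C ∩ M` can be toggled in every chain
through `C`. The smaller family still contains `M` and is closed under `· ∩ M`; once every member lies in `M`, the member `M`
can be toggled in every chain, the empty one included, which gives `χ = 1`.
-/

open Finset
open scoped Classical

/-- The Euler characteristic of a family `I` of subsets of a finite set:
the sum over all non-empty chains `C₁ ⊊ ⋯ ⊊ C_l` contained in `I` of `(-1)^(l-1)`.
A chain is identified with the (non-empty) subset `T ⊆ I` of its members, which is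
totally ordered by inclusion; its length is `T.card`. -/
noncomputable def eulerChar {X : Type*} [Fintype X] [DecidableEq X]
    (I : Finset (Finset X)) : ℤ :=
  ∑ T ∈ I.powerset.filter
      (fun T => T.Nonempty ∧ ∀ a ∈ T, ∀ b ∈ T, a ⊆ b ∨ b ⊆ a),
    (-1 : ℤ) ^ (T.card - 1)

theorem Finset.sum_neg_one_pow_card_eq_zero_of_toggle {α : Type*} [DecidableEq α]
    {𝒮 : Finset (Finset α)} (a : α) (h_insert : ∀ T ∈ 𝒮, insert a T ∈ 𝒮)
    (h_erase : ∀ T ∈ 𝒮, T.erase a ∈ 𝒮) :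
    ∑ T ∈ 𝒮, (-1 : ℤ) ^ #T = 0 := by
  refine sum_involution (fun T _ => if a ∈ T then T.erase a else insert a T)
    (fun T _ => ?_) (fun T hT _ => ?_) (fun T hT => ?_) (fun T _ => ?_)
  · by_cases ha : a ∈ T
    · rw [if_pos ha, ← card_erase_add_one ha, pow_succ]
      ring
    · rw [if_neg ha, card_insert_of_notMem ha, pow_succ]
      ring
  · by_cases ha : a ∈ T <;> simp [ha]
  · by_cases ha : a ∈ T
    · simpa [ha] using h_erase T hT
    · simpa [ha] using h_insert T hT
  · by_cases ha : a ∈ T <;> simp [ha]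

section Chains

variable {X : Type*} [DecidableEq X]

/-- Chains in `J`, the empty chain included. -/
def chains (J : Finset (Finset X)) : Finset (Finset (Finset X)) :=
  J.powerset.filter (fun T => ∀ a ∈ T, ∀ b ∈ T, a ⊆ b ∨ b ⊆ a)

theorem mem_chains {J T : Finset (Finset X)} :
    T ∈ chains J ↔ T ⊆ J ∧ ∀ a ∈ T, ∀ b ∈ T, a ⊆ b ∨ b ⊆ a := by
  simp [chains]

theorem eulerChar_eq_one_sub_sum_chains [Fintype X] (J : Finset (Finset X)) :
    eulerChar J = 1 - ∑ T ∈ chains J, (-1 : ℤ) ^ #T := by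
  have h_empty : ∅ ∈ chains J := by simp [mem_chains]
  have h_nonempty : (chains J).erase ∅ = J.powerset.filter
      (fun T => T.Nonempty ∧ ∀ a ∈ T, ∀ b ∈ T, a ⊆ b ∨ b ⊆ a) := by
    ext T
    simp [mem_chains, nonempty_iff_ne_empty, and_left_comm]
  rw [← add_sum_erase _ _ h_empty, h_nonempty, eulerChar, card_empty, pow_zero,
    sub_add_cancel_left, ← sum_neg_distrib]
  refine sum_congr rfl fun T hT => ?_
  obtain ⟨n, hn⟩ := Nat.exists_eq_add_one_of_ne_zero (mem_filter.1 hT).2.1.card_ne_zero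
  rw [hn, Nat.add_sub_cancel, pow_succ]
  ring

theorem mem_chains_of_subset {J S T : Finset (Finset X)} (hT : T ∈ chains J) (hST : S ⊆ T) :
    S ∈ chains J := by
  rw [mem_chains] at hT ⊢
  exact ⟨hST.trans hT.1, fun a ha b hb => hT.2 a (hST ha) b (hST hb)⟩

theorem insert_mem_chains {J T : Finset (Finset X)} {m : Finset X} (hT : T ∈ chains J)
    (hm : m ∈ J) (h_comp : ∀ D ∈ T, D ⊆ m ∨ m ⊆ D) : insert m T ∈ chains J := by
  rw [mem_chains] at hT ⊢
  refine ⟨insert_subset hm hT.1, ?_⟩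
  simp only [mem_insert, forall_eq_or_imp, subset_refl, or_self, true_and]
  exact ⟨fun b hb => (h_comp b hb).symm,
    fun a ha => ⟨h_comp a ha, fun b hb => hT.2 a ha b hb⟩⟩

variable [Fintype X]

theorem eulerChar_eq_one_of_forall_comparable {J : Finset (Finset X)} {m : Finset X}
    (hm : m ∈ J) (h_comp : ∀ D ∈ J, D ⊆ m ∨ m ⊆ D) : eulerChar J = 1 := by
  rw [eulerChar_eq_one_sub_sum_chains, sum_neg_one_pow_card_eq_zero_of_toggle m
    (fun T hT => insert_mem_chains hT hm fun D hD => h_comp D ((mem_chains.1 hT).1 hD))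
    (fun T hT => mem_chains_of_subset hT (erase_subset m T)), sub_zero]

theorem eulerChar_erase {J : Finset (Finset X)} {C m : Finset X} (hm : m ∈ J) (hmC : m ≠ C)
    (h_comp : ∀ D ∈ J, D ⊆ C ∨ C ⊆ D → D ⊆ m ∨ m ⊆ D) :
    eulerChar (J.erase C) = eulerChar J := by
  have h_through : ∑ T ∈ (chains J).filter (C ∈ ·), (-1 : ℤ) ^ #T = 0 := by
    refine sum_neg_one_pow_card_eq_zero_of_toggle m (fun T hT => ?_) (fun T hT => ?_) <;>
      obtain ⟨hT, hCT⟩ := mem_filter.1 hT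
    · refine mem_filter.2 ⟨insert_mem_chains hT hm fun D hD => ?_, mem_insert_of_mem hCT⟩
      exact h_comp D ((mem_chains.1 hT).1 hD) ((mem_chains.1 hT).2 D hD C hCT)
    · exact mem_filter.2 ⟨mem_chains_of_subset hT (erase_subset m T), mem_erase.2 ⟨hmC.symm, hCT⟩⟩
  have h_avoiding : (chains J).filter (C ∉ ·) = chains (J.erase C) := by
    ext T
    simp only [mem_filter, mem_chains, subset_erase]
    tauto
  rw [eulerChar_eq_one_sub_sum_chains, eulerChar_eq_one_sub_sum_chains,
    ← sum_filter_add_sum_filter_not (chains J) (C ∈ ·), h_through, zero_add, h_avoiding]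

theorem eulerChar_eq_one_of_inter_mem {J : Finset (Finset X)} {M : Finset X} (hM : M ∈ J) (h_inter : ∀ C ∈ J, C ∩ M ∈ J) :
    eulerChar J = 1 := by
  induction J using Finset.strongInduction with
  | H J ih =>
  by_cases h_below : ∀ C ∈ J, C ⊆ M
  · exact eulerChar_eq_one_of_forall_comparable hM fun D hD => Or.inl (h_below D hD)
  push Not at h_below
  obtain ⟨C, hC, h_min⟩ := (J.filter (¬ · ⊆ M)).exists_min_image card
    (h_below.imp fun C hC => mem_filter.2 hC)
  obtain ⟨hCJ, hCM⟩ := mem_filter.1 hC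
  have h_ne {D : Finset X} (hDM : D ⊆ M) : D ≠ C := fun h => hCM (h ▸ hDM)
  have h_comp : ∀ D ∈ J, D ⊆ C ∨ C ⊆ D → D ⊆ C ∩ M ∨ C ∩ M ⊆ D := by
    rintro D hD (hDC | hCD)
    · obtain rfl | hDC := hDC.eq_or_ssubset
      · exact Or.inr inter_subset_left
      · refine Or.inl (subset_inter hDC.subset ?_)
        by_contra hDM
        exact (card_lt_card hDC).not_ge (h_min D (mem_filter.2 ⟨hD, hDM⟩))
    · exact Or.inr (inter_subset_left.trans hCD)
  rw [← eulerChar_erase (h_inter C hCJ) (h_ne inter_subset_right) h_comp]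
  exact ih _ (erase_ssubset hCJ) (mem_erase.2 ⟨h_ne subset_rfl, hM⟩) fun D hD =>
    mem_erase.2 ⟨h_ne inter_subset_right, h_inter D (mem_of_mem_erase hD)⟩

end Chains

/-- If `I` is a non-empty family of subsets of a finite set `X` such that for all
`A, B ∈ I` either `A ∩ B ∈ I` or `A ∪ B ∈ I`, then `χ(I) = 1`. -/
theorem eulerChar_eq_one {X : Type*} [Fintype X] [DecidableEq X]
    (I : Finset (Finset X)) (hne : I.Nonempty)
    (hclosed : ∀ A ∈ I, ∀ B ∈ I, A ∩ B ∈ I ∨ A ∪ B ∈ I) :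
    eulerChar I = 1 := by
  obtain ⟨M, hM, h_max⟩ := I.exists_max_image card hne
  refine eulerChar_eq_one_of_inter_mem hM fun C hC => ?_
  rcases hclosed C hC M hM with h_inter | h_union
  · exact h_inter
  · have hCM : C ⊆ M :=
      union_eq_right.1 (eq_of_superset_of_card_ge subset_union_right (h_max _ h_union))
    rwa [inter_eq_left.2 hCM]
end

section
/- Let σ₁, σ₂ be permutations of {1,…,k} such that the group generated by σ₁ and σ₂ acts transitively on {1,…,k}, and let q : C(σ₂) → {2,3,…} be a coloring of the cycles of σ₂ satisfying ∑_{i∈C(σ₂)} q(i) = |C(σ₁)| + |C(σ₂)|. Define 𝓘 to be the family of subsets A ⊂ C(σ₂) with A ≠ ∅, A ≠ C(σ₂), such that at most ∑_{i∈A}(q(i)-1) cycles of σ₁ intersect the support of the cycles in A. Then ∑_{l≥0} ∑_{chains C₁⊊⋯⊊C_l in 𝓘} (-1)^l equals 1 if 𝓘 = ∅ and 0 otherwise. -/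
/-!
Write `d A = #{cycles of σ₁ meeting ⋃A} - ∑_{c ∈ A} (q c - 1)`, so that `𝓘` consists of the
nonempty proper `A ⊆ C(σ₂)` with `d A ≤ 0`. The function `d` is submodular (the first term is a
coverage function, the second is modular), vanishes at `∅` and, by the hypothesis on `∑ q`, at
`C(σ₂)`. Transitivity forces some cycle of `σ₁` to meet both `⋃A` and its complement, whence
`d A + d (C(σ₂) \ A) > 0` for nonempty proper `A`. Let `M` minimise `d`, and the cardinality
among the minimisers; submodularity then shows `A ∪ M ∈ 𝓘` for every `A ∈ 𝓘`. For such a family,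
toggling `(sup of the members of a chain not containing M) ∪ M` is a sign-reversing involution
on chains, so the chain sum vanishes.
-/

open Finset Equiv
open scoped Classical

/-- The cycle (orbit) of the point `x` under the permutation `σ`, as a set of points.
(Fixed points give singleton cycles.) -/
noncomputable def orbitOf {k : ℕ} (σ : Perm (Fin k)) (x : Fin k) : Finset (Fin k) :=
  Finset.univ.filter fun y => σ.SameCycle x y

/-- The set `C(σ)` of cycles of `σ`, each cycle represented by its set of points. -/
noncomputable def cyclesOf {k : ℕ} (σ : Perm (Fin k)) : Finset (Finset (Fin k)) :=
  Finset.univ.image (orbitOf σ)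

/-- The number of cycles of `σ₁` which intersect `⋃ A`, where `A` is a set of cycles
(of some other permutation). -/
noncomputable def meetCount {k : ℕ} (σ₁ : Perm (Fin k))
    (A : Finset (Finset (Fin k))) : ℕ :=
  ((cyclesOf σ₁).filter fun d => (d ∩ A.biUnion id).Nonempty).card

/-- The alternating sum `∑_{l ≥ 0} ∑_{chains C₁ ⊊ ⋯ ⊊ C_l in I} (-1)^l`, a chain being
identified with the subset `T ⊆ I` of its members; the empty chain contributes `+1`. -/
noncomputable def chainSum {β : Type*} (I : Finset (Finset β)) : ℤ :=
  ∑ T ∈ I.powerset.filter (fun T => ∀ a ∈ T, ∀ b ∈ T, a ⊆ b ∨ b ⊆ a),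
    (-1 : ℤ) ^ T.card

/-- The family `I` of non-trivial subsets `A` of `C(σ₂)` such that at most
`∑_{i ∈ A} (q(i) - 1)` cycles of `σ₁` intersect `⋃ A`. -/
noncomputable def badFamily {k : ℕ} (σ₁ σ₂ : Perm (Fin k))
    (q : Finset (Fin k) → ℕ) : Finset (Finset (Finset (Fin k))) :=
  (cyclesOf σ₂).powerset.filter fun A =>
    A.Nonempty ∧ A ≠ cyclesOf σ₂ ∧
      (meetCount σ₁ A : ℤ) ≤ ∑ c ∈ A, ((q c : ℤ) - 1)

namespace Finset

variable {α : Type*} [DecidableEq α]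

def toggle (a : α) (T : Finset α) : Finset α :=
  if a ∈ T then T.erase a else insert a T

lemma toggle_toggle (a : α) (T : Finset α) : toggle a (toggle a T) = T := by
  by_cases h : a ∈ T <;> simp [toggle, h]

lemma toggle_ne (a : α) (T : Finset α) : toggle a T ≠ T := by
  by_cases h : a ∈ T <;> simp [toggle, h]

lemma neg_one_pow_card_toggle (a : α) (T : Finset α) :
    (-1 : ℤ) ^ #(toggle a T) = -(-1) ^ #T := by
  by_cases h : a ∈ T
  · rw [toggle, if_pos h, ← card_erase_add_one h, pow_succ, mul_neg_one, neg_neg]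
  · rw [toggle, if_neg h, card_insert_of_notMem h, pow_succ, mul_neg_one]

lemma sum_neg_one_pow_card_eq_zero_of_toggle_s3 (S : Finset (Finset α)) (p : Finset α → α)
    (hS : ∀ T ∈ S, toggle (p T) T ∈ S) (hp : ∀ T ∈ S, p (toggle (p T) T) = p T) :
    ∑ T ∈ S, (-1 : ℤ) ^ #T = 0 :=
  sum_involution (fun T _ => toggle (p T) T)
    (fun T _ => by rw [neg_one_pow_card_toggle, add_neg_cancel])
    (fun T _ _ => toggle_ne _ _) hS
    (fun T hT => by rw [hp T hT, toggle_toggle])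

end Finset

section ChainSum

variable {α : Type*} [SemilatticeSup α] [OrderBot α]

noncomputable def chainPivot (M : α) (T : Finset α) : α :=
  (T.filter fun C => ¬ M ≤ C).sup id ⊔ M

lemma le_chainPivot (M : α) (T : Finset α) : M ≤ chainPivot M T := le_sup_right

lemma chainPivot_toggle [DecidableEq α] (M : α) (T : Finset α) :
    chainPivot M (toggle (chainPivot M T) T) = chainPivot M T := by
  have hM := le_chainPivot M T
  unfold toggle
  split_ifs
  · rw [chainPivot, filter_erase, erase_eq_of_notMem (by simp [hM]), ← chainPivot]
  · rw [chainPivot, filter_insert, if_neg (by simp [hM]), ← chainPivot]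

lemma IsChain.finset_sup_mem {T : Finset α} (hT : IsChain (· ≤ ·) (T : Set α)) (hne : T.Nonempty) :
    T.sup id ∈ T := by
  rw [← sup'_eq_sup hne]
  refine sup'_mem (T : Set α) (fun x hx y hy => ?_) T hne id fun _ h => h
  rcases hT.total hx hy with h | h
  · rwa [sup_of_le_right h]
  · rwa [sup_of_le_left h]

lemma chainPivot_mem {I T : Finset α} {M : α} (hM : M ∈ I) (hjoin : ∀ A ∈ I, A ⊔ M ∈ I)
    (hTI : T ⊆ I) (hT : IsChain (· ≤ ·) (T : Set α)) : chainPivot M T ∈ I := by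
  obtain hempty | hne := (T.filter fun C => ¬ M ≤ C).eq_empty_or_nonempty
  · rwa [chainPivot, hempty, sup_empty, bot_sup_eq]
  · have hchain := hT.mono (coe_subset.mpr (filter_subset (fun C => ¬ M ≤ C) T))
    exact hjoin _ (hTI (mem_filter.mp (hchain.finset_sup_mem hne)).1)

lemma isChain_insert_chainPivot {T : Finset α} {M : α} (hT : IsChain (· ≤ ·) (T : Set α)) :
    IsChain (· ≤ ·) (insert (chainPivot M T) (T : Set α)) := by
  refine hT.insert fun D hD _ => ?_
  by_cases hMD : M ≤ D
  · obtain hle | ⟨C, hC, hDC⟩ : (∀ C ∈ T.filter fun C => ¬ M ≤ C, C ≤ D) ∨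
        ∃ C ∈ T.filter fun C => ¬ M ≤ C, D ≤ C := by
      by_contra! h
      obtain ⟨C, hC, hCD⟩ := h.1
      exact hCD ((hT.total (mem_filter.mp hC).1 hD).resolve_right (h.2 C hC))
    · exact Or.inl (sup_le (Finset.sup_le hle) hMD)
    · exact Or.inr (hDC.trans (le_sup_of_le_left (le_sup (f := id) hC)))
  · exact Or.inr (le_sup_of_le_left (le_sup (f := id) (mem_filter.mpr ⟨hD, hMD⟩)))

theorem sum_isChain_neg_one_pow_card_eq_zero [DecidableEq α] (I : Finset α) {M : α} (hM : M ∈ I)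
    (hjoin : ∀ A ∈ I, A ⊔ M ∈ I) :
    ∑ T ∈ I.powerset.filter (fun T : Finset α => IsChain (· ≤ ·) (T : Set α)),
      (-1 : ℤ) ^ #T = 0 := by
  refine sum_neg_one_pow_card_eq_zero_of_toggle_s3 _ (chainPivot M) (fun T hT => ?_)
    fun T _ => chainPivot_toggle M T
  rw [mem_filter, mem_powerset] at hT ⊢
  unfold toggle
  split_ifs
  · exact ⟨(erase_subset _ _).trans hT.1, hT.2.mono (by simp)⟩
  · exact ⟨insert_subset (chainPivot_mem hM hjoin hT.1 hT.2) hT.1, by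
      simpa using isChain_insert_chainPivot hT.2⟩

end ChainSum

theorem chainSum_eq_zero_of_union_mem {β : Type*} [DecidableEq β] (I : Finset (Finset β))
    {M : Finset β} (hM : M ∈ I) (hjoin : ∀ A ∈ I, A ∪ M ∈ I) : chainSum I = 0 := by
  convert sum_isChain_neg_one_pow_card_eq_zero I hM hjoin using 1
  refine sum_congr ?_ fun _ _ => rfl
  ext T
  simp only [mem_filter]
  refine and_congr_right fun _ => ?_
  exact ⟨fun h a ha b hb _ => h a ha b hb, fun h a ha b hb => h.total ha hb⟩

section Submodular

variable {α : Type*} [DecidableEq α] {U : Finset α} {d : Finset α → ℤ}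

lemma union_ssubset_and_nonpos_of_minimal
    (hsub : ∀ A B, d (A ∪ B) + d (A ∩ B) ≤ d A + d B) (hempty : d ∅ = 0) (hU : d U = 0)
    (hcompl : ∀ A, A.Nonempty → A ⊂ U → 0 < d A + d (U \ A)) {M A : Finset α}
    (hMU : M ⊂ U) (hdM : ∀ X, X.Nonempty → X ⊂ U → d M ≤ d X)
    (hMmin : ∀ X, X.Nonempty → X ⊆ M → d X ≤ d M → X = M)
    (hAne : A.Nonempty) (hAU : A ⊂ U) (hdA : d A ≤ 0) :
    A ∪ M ⊂ U ∧ d (A ∪ M) ≤ 0 := by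
  have hsubAM := hsub A M
  have hinter : (A ∩ M).Nonempty → d M ≤ d (A ∩ M) := fun h =>
    hdM _ h (inter_subset_left.trans_ssubset hAU)
  have hunion : A ∪ M ≠ U := by
    intro hfull
    rw [hfull, hU] at hsubAM
    obtain hdisj | hne := (A ∩ M).eq_empty_or_nonempty
    · have hM : U \ A = M := by
        rw [← hfull, union_sdiff_left, Finset.sdiff_eq_self_iff_disjoint, disjoint_comm,
          disjoint_iff_inter_eq_empty, hdisj]
      have := hcompl A hAne hAU
      rw [hM] at this
      linarith [hdM A hAne hAU]
    · have hMA : A ∩ M = M := hMmin _ hne inter_subset_right (by linarith)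
      rw [union_eq_left.mpr (hMA ▸ inter_subset_left)] at hfull
      exact hAU.ne hfull
  refine ⟨ssubset_of_subset_of_ne (union_subset hAU.subset hMU.subset) hunion, ?_⟩
  obtain hdisj | hne := (A ∩ M).eq_empty_or_nonempty
  · rw [hdisj, hempty] at hsubAM
    linarith [hdM A hAne hAU]
  · linarith [hinter hne]

theorem exists_union_mem_of_submodular (I : Finset (Finset α))
    (hI : ∀ A, A ∈ I ↔ A.Nonempty ∧ A ⊂ U ∧ d A ≤ 0) (hIne : I.Nonempty)
    (hsub : ∀ A B, d (A ∪ B) + d (A ∩ B) ≤ d A + d B) (hempty : d ∅ = 0) (hU : d U = 0)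
    (hcompl : ∀ A, A.Nonempty → A ⊂ U → 0 < d A + d (U \ A)) :
    ∃ M ∈ I, ∀ A ∈ I, A ∪ M ∈ I := by
  obtain ⟨A₀, hA₀⟩ := hIne
  obtain ⟨hA₀ne, hA₀U, hdA₀⟩ := (hI A₀).mp hA₀
  have hmemD : ∀ X, X ∈ U.ssubsets.filter Finset.Nonempty ↔ X.Nonempty ∧ X ⊂ U := by
    simp [and_comm]
  obtain ⟨M, hMD, hMlex⟩ := (U.ssubsets.filter Finset.Nonempty).exists_min_image
    (fun X => toLex (d X, #X)) ⟨A₀, (hmemD A₀).mpr ⟨hA₀ne, hA₀U⟩⟩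
  obtain ⟨hMne, hMU⟩ := (hmemD M).mp hMD
  have hdM : ∀ X, X.Nonempty → X ⊂ U → d M ≤ d X := fun X hX hXU =>
    (Prod.Lex.toLex_le_toLex'.mp (hMlex X ((hmemD X).mpr ⟨hX, hXU⟩))).1
  have hMminimal : ∀ X, X.Nonempty → X ⊆ M → d X ≤ d M → X = M := fun X hX hXM hdX =>
    eq_of_subset_of_card_le hXM ((Prod.Lex.toLex_le_toLex'.mp
      (hMlex X ((hmemD X).mpr ⟨hX, hXM.trans_ssubset hMU⟩))).2 (le_antisymm (hdM X hX
        (hXM.trans_ssubset hMU)) hdX))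
  refine ⟨M, (hI M).mpr ⟨hMne, hMU, (hdM A₀ hA₀ne hA₀U).trans hdA₀⟩, fun A hA => ?_⟩
  obtain ⟨hAne, hAU, hdA⟩ := (hI A).mp hA
  exact (hI _).mpr ⟨hAne.mono subset_union_left, union_ssubset_and_nonpos_of_minimal hsub
    hempty hU hcompl hMU hdM hMminimal hAne hAU hdA⟩

end Submodular

section Meeting

variable {β : Type*} [DecidableEq β] (P : Finset (Finset β))

lemma filter_inter_union_nonempty (S T : Finset β) :
    P.filter (fun d => (d ∩ (S ∪ T)).Nonempty) =
      P.filter (fun d => (d ∩ S).Nonempty) ∪ P.filter (fun d => (d ∩ T).Nonempty) := by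
  rw [← filter_or]
  simp only [inter_union_distrib_left, union_nonempty]

lemma card_filter_inter_union_add_inter_le (S T : Finset β) :
    #(P.filter fun d => (d ∩ (S ∪ T)).Nonempty) + #(P.filter fun d => (d ∩ (S ∩ T)).Nonempty) ≤
      #(P.filter fun d => (d ∩ S).Nonempty) + #(P.filter fun d => (d ∩ T).Nonempty) := by
  rw [filter_inter_union_nonempty, ← card_union_add_card_inter (P.filter _)]
  refine Nat.add_le_add_left (card_le_card fun d hd => ?_) _
  obtain ⟨hdP, hdST⟩ := mem_filter.mp hd
  exact mem_inter.mpr ⟨mem_filter.mpr ⟨hdP, hdST.mono (inter_subset_inter_left inter_subset_left)⟩,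
    mem_filter.mpr ⟨hdP, hdST.mono (inter_subset_inter_left inter_subset_right)⟩⟩

lemma card_lt_card_filter_inter_add {S T : Finset β}
    (hcover : ∀ d ∈ P, (d ∩ (S ∪ T)).Nonempty) {c : Finset β} (hc : c ∈ P)
    (hcS : (c ∩ S).Nonempty) (hcT : (c ∩ T).Nonempty) :
    #P < #(P.filter fun d => (d ∩ S).Nonempty) + #(P.filter fun d => (d ∩ T).Nonempty) := by
  rw [← card_union_add_card_inter, ← filter_inter_union_nonempty, filter_true_of_mem hcover]
  exact Nat.lt_add_of_pos_right (card_pos.mpr ⟨c, by simp [hc, hcS, hcT]⟩)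

end Meeting

open scoped Pointwise in
lemma exists_apply_mem_iff_ne_of_transitive {α : Type*} {G : Set (Perm α)}
    (htrans : ∀ x y, ∃ g ∈ Subgroup.closure G, g x = y) {S : Set α} (hS : S.Nonempty)
    (hS' : S ≠ Set.univ) : ∃ σ ∈ G, ∃ x, ¬ (σ x ∈ S ↔ x ∈ S) := by
  by_contra! hstab
  have hle : Subgroup.closure G ≤ MulAction.stabilizer (Perm α) S :=
    (Subgroup.closure_le _).mpr fun σ hσ => MulAction.mem_stabilizer_set.mpr (hstab σ hσ)
  obtain ⟨x, hx⟩ := hS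
  obtain ⟨y, hy⟩ := (Set.ne_univ_iff_exists_notMem S).mp hS'
  obtain ⟨g, hg, rfl⟩ := htrans x y
  exact hy ((MulAction.mem_stabilizer_set.mp (hle hg) x).mpr hx)

section Cycles

variable {k : ℕ} (σ : Perm (Fin k))

lemma mem_orbitOf {x y : Fin k} : y ∈ orbitOf σ x ↔ σ.SameCycle x y := by
  simp [orbitOf]

lemma mem_orbitOf_self (x : Fin k) : x ∈ orbitOf σ x := (mem_orbitOf σ).mpr (.refl σ x)

lemma apply_mem_orbitOf (x : Fin k) : σ x ∈ orbitOf σ x :=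
  (mem_orbitOf σ).mpr (Perm.sameCycle_apply_right.mpr (.refl σ x))

lemma orbitOf_eq_of_sameCycle {x y : Fin k} (h : σ.SameCycle x y) : orbitOf σ x = orbitOf σ y := by
  ext z
  simp only [mem_orbitOf]
  exact ⟨h.symm.trans, h.trans⟩

lemma orbitOf_mem_cyclesOf (x : Fin k) : orbitOf σ x ∈ cyclesOf σ :=
  mem_image_of_mem _ (mem_univ x)

lemma mem_biUnion_id_iff {A : Finset (Finset (Fin k))} (hA : A ⊆ cyclesOf σ) (x : Fin k) :
    x ∈ A.biUnion id ↔ orbitOf σ x ∈ A := by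
  refine ⟨fun hx => ?_, fun h => mem_biUnion.mpr ⟨_, h, mem_orbitOf_self σ x⟩⟩
  obtain ⟨c, hcA, hxc⟩ := mem_biUnion.mp hx
  obtain ⟨y, -, rfl⟩ := mem_image.mp (hA hcA)
  rwa [← orbitOf_eq_of_sameCycle σ ((mem_orbitOf σ).mp hxc)]

lemma biUnion_id_cyclesOf : (cyclesOf σ).biUnion id = univ :=
  eq_univ_of_forall fun x => (mem_biUnion_id_iff σ Subset.rfl x).mpr (orbitOf_mem_cyclesOf σ x)

lemma meetCount_cyclesOf (σ₁ σ₂ : Perm (Fin k)) : meetCount σ₁ (cyclesOf σ₂) = #(cyclesOf σ₁) := by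
  rw [meetCount, biUnion_id_cyclesOf, filter_true_of_mem]
  intro c hc
  obtain ⟨x, -, rfl⟩ := mem_image.mp hc
  exact ⟨x, mem_inter.mpr ⟨mem_orbitOf_self σ₁ x, mem_univ x⟩⟩

lemma meetCount_union_add_meetCount_inter_le (σ₁ : Perm (Fin k))
    (A B : Finset (Finset (Fin k))) :
    meetCount σ₁ (A ∪ B) + meetCount σ₁ (A ∩ B) ≤ meetCount σ₁ A + meetCount σ₁ B := by
  refine le_trans ?_ (card_filter_inter_union_add_inter_le _ (A.biUnion id) (B.biUnion id))
  rw [meetCount, meetCount, union_biUnion]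
  have hsub : (A ∩ B).biUnion id ⊆ A.biUnion id ∩ B.biUnion id :=
    subset_inter (biUnion_subset_biUnion_of_subset_left _ inter_subset_left)
      (biUnion_subset_biUnion_of_subset_left _ inter_subset_right)
  refine Nat.add_le_add_left (card_le_card fun d hd => ?_) _
  rw [mem_filter] at hd ⊢
  exact ⟨hd.1, hd.2.mono (inter_subset_inter_left hsub)⟩

end Cycles

lemma exists_apply_mem_biUnion_iff_ne {k : ℕ} {σ₁ σ₂ : Perm (Fin k)}
    (htrans : ∀ x y : Fin k,
      ∃ g ∈ Subgroup.closure ({σ₁, σ₂} : Set (Perm (Fin k))), g x = y)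
    {A : Finset (Finset (Fin k))} (hAne : A.Nonempty) (hA : A ⊂ cyclesOf σ₂) :
    ∃ x, ¬ (σ₁ x ∈ A.biUnion id ↔ x ∈ A.biUnion id) := by
  have hS : ∀ x, x ∈ A.biUnion id ↔ orbitOf σ₂ x ∈ A := mem_biUnion_id_iff σ₂ hA.subset
  have hSne : (↑(A.biUnion id) : Set (Fin k)).Nonempty := by
    obtain ⟨c, hc⟩ := hAne
    obtain ⟨x, -, rfl⟩ := mem_image.mp (hA.subset hc)
    exact ⟨x, (hS x).mpr hc⟩
  have hSuniv : (↑(A.biUnion id) : Set (Fin k)) ≠ Set.univ := by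
    obtain ⟨c, hc, hcA⟩ := exists_of_ssubset hA
    obtain ⟨x, -, rfl⟩ := mem_image.mp hc
    exact (Set.ne_univ_iff_exists_notMem _).mpr ⟨x, mt (hS x).mp hcA⟩
  obtain ⟨σ, hσ, x, hx⟩ := exists_apply_mem_iff_ne_of_transitive htrans hSne hSuniv
  simp only [mem_coe] at hx
  obtain rfl | rfl : σ = σ₁ ∨ σ = σ₂ := hσ
  · exact ⟨x, hx⟩
  · rw [hS, hS, orbitOf_eq_of_sameCycle σ (Perm.sameCycle_apply_left.mpr (.refl σ x))] at hx
    exact absurd Iff.rfl hx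

lemma card_cyclesOf_lt_meetCount_add_meetCount_sdiff {k : ℕ} {σ₁ σ₂ : Perm (Fin k)}
    (htrans : ∀ x y : Fin k,
      ∃ g ∈ Subgroup.closure ({σ₁, σ₂} : Set (Perm (Fin k))), g x = y)
    {A : Finset (Finset (Fin k))} (hAne : A.Nonempty) (hA : A ⊂ cyclesOf σ₂) :
    #(cyclesOf σ₁) < meetCount σ₁ A + meetCount σ₁ (cyclesOf σ₂ \ A) := by
  set S := A.biUnion id
  have hT : ∀ x, x ∈ (cyclesOf σ₂ \ A).biUnion id ↔ x ∉ S := fun x => by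
    rw [mem_biUnion_id_iff σ₂ sdiff_subset, mem_sdiff, mem_biUnion_id_iff σ₂ hA.subset]
    exact and_iff_right (orbitOf_mem_cyclesOf σ₂ x)
  have hST : S ∪ (cyclesOf σ₂ \ A).biUnion id = univ :=
    eq_univ_of_forall fun y => by rw [mem_union, hT]; exact em _
  obtain ⟨x, hx⟩ := exists_apply_mem_biUnion_iff_ne htrans hAne hA
  obtain ⟨y, hyc, hyS, z, hzc, hzS⟩ :
      ∃ y ∈ orbitOf σ₁ x, y ∈ S ∧ ∃ z ∈ orbitOf σ₁ x, z ∉ S := by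
    by_cases hxS : x ∈ S
    · exact ⟨x, mem_orbitOf_self σ₁ x, hxS, σ₁ x, apply_mem_orbitOf σ₁ x, by tauto⟩
    · exact ⟨σ₁ x, apply_mem_orbitOf σ₁ x, by tauto, x, mem_orbitOf_self σ₁ x, hxS⟩
  refine card_lt_card_filter_inter_add _ (fun d hd => ?_) (orbitOf_mem_cyclesOf σ₁ x)
    ⟨y, mem_inter.mpr ⟨hyc, hyS⟩⟩ ⟨z, mem_inter.mpr ⟨hzc, (hT z).mpr hzS⟩⟩
  obtain ⟨w, -, rfl⟩ := mem_image.mp hd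
  rw [hST, inter_univ]
  exact ⟨w, mem_orbitOf_self σ₁ w⟩

section Defect

variable {k : ℕ} (σ₁ : Perm (Fin k)) (q : Finset (Fin k) → ℕ)

noncomputable def defect (A : Finset (Finset (Fin k))) : ℤ :=
  meetCount σ₁ A - ∑ c ∈ A, ((q c : ℤ) - 1)

lemma defect_empty : defect σ₁ q ∅ = 0 := by
  simp [defect, meetCount]

lemma defect_union_add_defect_inter_le (A B : Finset (Finset (Fin k))) :
    defect σ₁ q (A ∪ B) + defect σ₁ q (A ∩ B) ≤ defect σ₁ q A + defect σ₁ q B := by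
  have hmeet := meetCount_union_add_meetCount_inter_le σ₁ A B
  have hsum := sum_union_inter (s₁ := A) (s₂ := B) (f := fun c => (q c : ℤ) - 1)
  simp only [defect]
  omega

variable {σ₁ q} {σ₂ : Perm (Fin k)}

lemma sum_cyclesOf_sub_one (hsum : ∑ c ∈ cyclesOf σ₂, q c = #(cyclesOf σ₁) + #(cyclesOf σ₂)) :
    ∑ c ∈ cyclesOf σ₂, ((q c : ℤ) - 1) = #(cyclesOf σ₁) := by
  rw [sum_sub_distrib, ← Nat.cast_sum, hsum]
  simp

lemma defect_cyclesOf (hsum : ∑ c ∈ cyclesOf σ₂, q c = #(cyclesOf σ₁) + #(cyclesOf σ₂)) :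
    defect σ₁ q (cyclesOf σ₂) = 0 := by
  rw [defect, meetCount_cyclesOf, sum_cyclesOf_sub_one hsum, sub_self]

lemma defect_add_defect_sdiff_pos
    (hsum : ∑ c ∈ cyclesOf σ₂, q c = #(cyclesOf σ₁) + #(cyclesOf σ₂))
    (htrans : ∀ x y : Fin k,
      ∃ g ∈ Subgroup.closure ({σ₁, σ₂} : Set (Perm (Fin k))), g x = y)
    {A : Finset (Finset (Fin k))} (hAne : A.Nonempty) (hA : A ⊂ cyclesOf σ₂) :
    0 < defect σ₁ q A + defect σ₁ q (cyclesOf σ₂ \ A) := by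
  have hlt := card_cyclesOf_lt_meetCount_add_meetCount_sdiff htrans hAne hA
  have hsplit := sum_sdiff (f := fun c => (q c : ℤ) - 1) hA.subset
  rw [sum_cyclesOf_sub_one hsum] at hsplit
  simp only [defect]
  omega

end Defect

lemma mem_badFamily {k : ℕ} {σ₁ σ₂ : Perm (Fin k)} {q : Finset (Fin k) → ℕ}
    {A : Finset (Finset (Fin k))} :
    A ∈ badFamily σ₁ σ₂ q ↔ A.Nonempty ∧ A ⊂ cyclesOf σ₂ ∧ defect σ₁ q A ≤ 0 := by
  rw [badFamily, mem_filter, mem_powerset, defect, sub_nonpos, ssubset_iff_subset_ne]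
  tauto

theorem chainSum_badFamily_general {k : ℕ} (σ₁ σ₂ : Perm (Fin k))
    (htrans : ∀ x y : Fin k,
      ∃ g ∈ Subgroup.closure ({σ₁, σ₂} : Set (Perm (Fin k))), g x = y)
    (q : Finset (Fin k) → ℕ)
    (hsum : ∑ c ∈ cyclesOf σ₂, q c = (cyclesOf σ₁).card + (cyclesOf σ₂).card) :
    chainSum (badFamily σ₁ σ₂ q)
      = if badFamily σ₁ σ₂ q = ∅ then 1 else 0 := by
  split_ifs with hempty
  · simp [hempty, chainSum, sum_filter]
  obtain ⟨M, hM, hjoin⟩ := exists_union_mem_of_submodular (badFamily σ₁ σ₂ q)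
    (fun _ => mem_badFamily) (nonempty_iff_ne_empty.mpr hempty)
    (defect_union_add_defect_inter_le σ₁ q) (defect_empty σ₁ q) (defect_cyclesOf hsum)
    fun _ => defect_add_defect_sdiff_pos hsum htrans
  exact chainSum_eq_zero_of_union_mem _ hM hjoin

/-- Let `σ₁, σ₂` be permutations of `{1,…,k}` generating a transitive group, and let
`q : C(σ₂) → {2,3,…}` with `∑_{i∈C(σ₂)} q(i) = |C(σ₁)| + |C(σ₂)|`. Then the alternating
chain sum over the family `I` of non-trivial subsets `A ⊂ C(σ₂)` such that at most
`∑_{i∈A} (q(i)-1)` cycles of `σ₁` intersect `⋃A` equals `1` if `I = ∅` and `0` otherwise. -/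
theorem chainSum_badFamily {k : ℕ} (σ₁ σ₂ : Perm (Fin k))
    (htrans : ∀ x y : Fin k,
      ∃ g ∈ Subgroup.closure ({σ₁, σ₂} : Set (Perm (Fin k))), g x = y)
    (q : Finset (Fin k) → ℕ) (hq : ∀ c ∈ cyclesOf σ₂, 2 ≤ q c)
    (hsum : ∑ c ∈ cyclesOf σ₂, q c = (cyclesOf σ₁).card + (cyclesOf σ₂).card) :
    chainSum (badFamily σ₁ σ₂ q)
      = if badFamily σ₁ σ₂ q = ∅ then 1 else 0 :=
  chainSum_badFamily_general σ₁ σ₂ htrans q hsum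
end

section
/- Let G be a finite bipartite graph with white vertices W and black vertices B, and q : B → ℕ with q(j) ≥ 2 for all j. Suppose that for every A ⊆ B, |N_G(A)| ≥ ∑_{j∈A}(q(j)−1), with equality if and only if A is the set of black vertices of a union of connected components of G. Then there exists a strictly positive solution (x_{ij} > 0 on each edge) to the system: ∑_j x_{ij} = 1 for each white vertex i, ∑_i x_{ij} = q(j)−1 for each black vertex j. -/
/-!
Call `f : W → B` an assignment if it sends every white vertex to a neighbour and every black
vertex `j` receives exactly `q j - 1` white vertices. Splitting each black vertex `j` into
`q j - 1` copies, Hall's inequality `|N(A)| ≥ ∑_{j ∈ A} (q j - 1)` and the count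
`|W| = ∑_j (q j - 1)` (equality for `A = B`) turn Hall's marriage theorem into the existence of an
assignment. Forcing a given edge `i₀ j₀` into the assignment deletes the other edges at `i₀`; this
only hurts sets `A` with `i₀ ∈ N(A)` and `j₀ ∉ A`, for which Hall's inequality is strict because
equality holds only on unions of components. So every edge lies in some assignment, and the
average of all assignments is a strictly positive transportation plan.
-/

open Finset
open scoped Classical

/-- The set `N_G(A)` of white vertices having a neighbor in the black set `A`. -/
noncomputable def nbhd {W B : Type*} [Fintype W] (E : W → B → Prop)
    (A : Finset B) : Finset W :=
  Finset.univ.filter fun i => ∃ j ∈ A, E i j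

section Assignments

variable {W B : Type*} [Fintype W]

lemma mem_nbhd {E : W → B → Prop} {A : Finset B} {i : W} :
    i ∈ nbhd E A ↔ ∃ j ∈ A, E i j := by
  simp [nbhd]

lemma biUnion_nbhd_singleton {ι : Type*} (E : W → B → Prop) (φ : ι → B) (S : Finset ι) :
    S.biUnion (fun p => nbhd E {φ p}) = nbhd E (S.image φ) := by
  ext i
  simp [mem_nbhd]

def pinEdge (E : W → B → Prop) (i₀ : W) (j₀ : B) : W → B → Prop :=
  fun i j => E i j ∧ (i = i₀ → j = j₀)

lemma erase_nbhd_subset_nbhd_pinEdge (E : W → B → Prop) (i₀ : W) (j₀ : B) (A : Finset B) :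
    (nbhd E A).erase i₀ ⊆ nbhd (pinEdge E i₀ j₀) A := by
  intro i hi
  obtain ⟨hi₀, j, hj, hij⟩ : i ≠ i₀ ∧ ∃ j ∈ A, E i j := by simpa [mem_nbhd] using hi
  exact mem_nbhd.2 ⟨j, hj, hij, fun h => absurd h hi₀⟩

/-- If `i₀` loses its neighbours in `A` by pinning, then `j₀ ∉ A`, so `A` is not closed under
the edges leaving `nbhd E A` and Hall's inequality for `A` was strict. -/
lemma sum_le_card_nbhd_pinEdge {E : W → B → Prop} {c : B → ℕ}
    (hhall : ∀ A : Finset B, ∑ j ∈ A, c j ≤ #(nbhd E A))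
    (heq : ∀ A : Finset B, #(nbhd E A) = ∑ j ∈ A, c j ↔ ∀ i ∈ nbhd E A, ∀ j, E i j → j ∈ A)
    {i₀ : W} {j₀ : B} (h₀ : E i₀ j₀) (A : Finset B) :
    ∑ j ∈ A, c j ≤ #(nbhd (pinEdge E i₀ j₀) A) := by
  have hsub := erase_nbhd_subset_nbhd_pinEdge E i₀ j₀ A
  by_cases hpin : i₀ ∈ nbhd (pinEdge E i₀ j₀) A
  · calc ∑ j ∈ A, c j ≤ #(nbhd E A) := hhall A
      _ ≤ _ := card_le_card fun i hi => by
        by_cases h : i = i₀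
        · exact h ▸ hpin
        · exact hsub (mem_erase.2 ⟨h, hi⟩)
  by_cases hi₀ : i₀ ∈ nbhd E A
  · have hj₀ : j₀ ∉ A := fun hj₀ => hpin (mem_nbhd.2 ⟨j₀, hj₀, h₀, fun _ => rfl⟩)
    have hlt : ∑ j ∈ A, c j < #(nbhd E A) :=
      (hhall A).lt_of_ne fun h => hj₀ ((heq A).1 h.symm i₀ hi₀ j₀ h₀)
    calc ∑ j ∈ A, c j ≤ #((nbhd E A).erase i₀) := by rw [card_erase_of_mem hi₀]; omega
      _ ≤ _ := card_le_card hsub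
  · calc ∑ j ∈ A, c j ≤ #(nbhd E A) := hhall A
      _ = #((nbhd E A).erase i₀) := (congrArg card (erase_eq_of_notMem hi₀)).symm
      _ ≤ _ := card_le_card hsub

variable [Fintype B]

lemma nbhd_univ {E : W → B → Prop} (hE : ∀ i, ∃ j, E i j) : nbhd E univ = univ :=
  eq_univ_of_forall fun i => mem_nbhd.2 <| by simpa using hE i

lemma card_filter_sigma_fst_eq (c : B → ℕ) (j : B) :
    #{p : Σ j, Fin (c j) | p.1 = j} = c j := by
  rw [← Fintype.card_subtype, Fintype.card_congr (Equiv.sigmaSubtype j), Fintype.card_fin]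

def IsAssignment (E : W → B → Prop) (c : B → ℕ) (f : W → B) : Prop :=
  (∀ i, E i (f i)) ∧ ∀ j, #{i | f i = j} = c j

/-- Hall's theorem applied to the copies `⟨j, k⟩`, `k < c j`, of the black vertices; the
injection it provides is a bijection onto `W` by counting. -/
theorem exists_isAssignment_of_hall (E : W → B → Prop) (c : B → ℕ)
    (hcard : ∑ j, c j = Fintype.card W)
    (hhall : ∀ A : Finset B, ∑ j ∈ A, c j ≤ #(nbhd E A)) :
    ∃ f, IsAssignment E c f := by
  let t : (Σ j, Fin (c j)) → Finset W := fun p => nbhd E {p.1}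
  have hall : ∀ S, #S ≤ #(S.biUnion t) := by
    intro S
    rw [biUnion_nbhd_singleton]
    calc #S ≤ #((S.image Sigma.fst).sigma fun j => (univ : Finset (Fin (c j)))) :=
          card_le_card fun p hp => mem_sigma.2 ⟨mem_image_of_mem _ hp, mem_univ _⟩
      _ = ∑ j ∈ S.image Sigma.fst, c j := by simp
      _ ≤ _ := hhall _
  obtain ⟨g, hg_inj, hg_mem⟩ := (all_card_le_biUnion_card_iff_exists_injective t).1 hall
  have hg_bij : Function.Bijective g :=
    (Fintype.bijective_iff_injective_and_card g).2 ⟨hg_inj, by simp [hcard]⟩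
  let e := Equiv.ofBijective g hg_bij
  refine ⟨fun i => (e.symm i).1, fun i => ?_, fun j => ?_⟩
  · obtain ⟨j, hj, hij⟩ := mem_nbhd.1 (hg_mem (e.symm i))
    rwa [mem_singleton.1 hj, show g (e.symm i) = i from e.apply_symm_apply i] at hij
  · rw [← card_filter_sigma_fst_eq c j]
    exact card_equiv e.symm (by simp)

theorem exists_isAssignment_apply_eq {E : W → B → Prop} {c : B → ℕ}
    (hcard : ∑ j, c j = Fintype.card W)
    (hhall : ∀ A : Finset B, ∑ j ∈ A, c j ≤ #(nbhd E A))
    (heq : ∀ A : Finset B, #(nbhd E A) = ∑ j ∈ A, c j ↔ ∀ i ∈ nbhd E A, ∀ j, E i j → j ∈ A)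
    {i₀ : W} {j₀ : B} (h₀ : E i₀ j₀) :
    ∃ f, IsAssignment E c f ∧ f i₀ = j₀ := by
  obtain ⟨f, hfE, hfc⟩ :=
    exists_isAssignment_of_hall _ c hcard (sum_le_card_nbhd_pinEdge hhall heq h₀)
  exact ⟨f, ⟨fun i => (hfE i).1, hfc⟩, (hfE i₀).2 rfl⟩

noncomputable def assignments (E : W → B → Prop) (c : B → ℕ) : Finset (W → B) :=
  {f | IsAssignment E c f}

@[simp]
lemma mem_assignments {E : W → B → Prop} {c : B → ℕ} {f : W → B} :
    f ∈ assignments E c ↔ IsAssignment E c f := by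
  simp [assignments]

noncomputable def averagePlan (E : W → B → Prop) (c : B → ℕ) (i : W) (j : B) : ℝ :=
  #{f ∈ assignments E c | f i = j} / #(assignments E c)

section averagePlan

variable {E : W → B → Prop} {c : B → ℕ}

lemma averagePlan_pos {i : W} {j : B} (h : ∃ f, IsAssignment E c f ∧ f i = j) :
    0 < averagePlan E c i j := by
  obtain ⟨f, hf, hfi⟩ := h
  have hmem : f ∈ {f ∈ assignments E c | f i = j} := by simp [hf, hfi]
  exact div_pos (by exact_mod_cast card_pos.2 ⟨f, hmem⟩)
    (by exact_mod_cast card_pos.2 ⟨f, (mem_filter.1 hmem).1⟩)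

lemma sum_averagePlan_row (hne : (assignments E c).Nonempty) (i : W) :
    ∑ j ∈ {j | E i j}, averagePlan E c i j = 1 := by
  have hmaps : (assignments E c : Set (W → B)).MapsTo (· i) ({j | E i j} : Finset B) :=
    fun f hf => mem_filter.2 ⟨mem_univ _, (mem_assignments.1 hf).1 i⟩
  simp only [averagePlan]
  rw [← sum_div, ← Nat.cast_sum, ← card_eq_sum_card_fiberwise hmaps,
    div_self (by exact_mod_cast hne.card_pos.ne')]

lemma sum_averagePlan_col (hne : (assignments E c).Nonempty) (j : B) :
    ∑ i ∈ {i | E i j}, averagePlan E c i j = c j := by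
  have hfiber : ∀ f ∈ assignments E c, #{i ∈ {i | E i j} | f i = j} = c j := fun f hf => by
    obtain ⟨hfE, hfc⟩ := mem_assignments.1 hf
    rw [filter_filter, ← hfc j]
    exact congrArg card (filter_congr fun i _ => ⟨And.right, fun h => ⟨h ▸ hfE i, h⟩⟩)
  have hdouble := sum_card_bipartiteAbove_eq_sum_card_bipartiteBelow (s := {i | E i j})
    (t := assignments E c) (r := fun i f => f i = j)
  simp only [bipartiteAbove, bipartiteBelow] at hdouble
  simp only [averagePlan]
  rw [← sum_div, ← Nat.cast_sum, hdouble, sum_congr rfl hfiber, sum_const, smul_eq_mul,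
    Nat.cast_mul, mul_div_cancel_left₀ _ (by exact_mod_cast hne.card_pos.ne')]

end averagePlan

end Assignments

/-- Let `G` be a finite bipartite graph with white part `W` and black part `B` (every white
vertex lying on some edge) and `q : B → ℕ` with `q(j) ≥ 2`. Suppose that for every `A ⊆ B`
one has `|N_G(A)| ≥ ∑_{j∈A}(q(j)−1)`, with equality if and only if `A` is the set of black
vertices of a union of connected components of `G` (equivalently: there is no edge between
`N_G(A)` and `B∖A`). Then there is a strictly positive solution of the transportation
system: row sums `1` at white vertices and column sums `q(j) − 1` at black vertices. -/
theorem q_admissible_implies_transportation {W B : Type*} [Fintype W] [Fintype B]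
    (E : W → B → Prop) (q : B → ℕ) (hq : ∀ j, 2 ≤ q j)
    (hwhite : ∀ i : W, ∃ j : B, E i j)
    (hhall : ∀ A : Finset B, (∑ j ∈ A, ((q j : ℤ) - 1)) ≤ ((nbhd E A).card : ℤ))
    (heq : ∀ A : Finset B,
      (((nbhd E A).card : ℤ) = ∑ j ∈ A, ((q j : ℤ) - 1)) ↔
        (∀ i ∈ nbhd E A, ∀ j, E i j → j ∈ A)) :
    ∃ x : W → B → ℝ,
      (∀ i j, E i j → 0 < x i j) ∧
      (∀ i, ∑ j ∈ Finset.univ.filter (fun j => E i j), x i j = 1) ∧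
      (∀ j, ∑ i ∈ Finset.univ.filter (fun i => E i j), x i j = (q j : ℝ) - 1) := by
  set c : B → ℕ := fun j => q j - 1
  have hc (j : B) : (c j : ℤ) = q j - 1 := by have := hq j; simp only [c]; omega
  have hc_sum (A : Finset B) : ((∑ j ∈ A, c j : ℕ) : ℤ) = ∑ j ∈ A, ((q j : ℤ) - 1) := by
    push_cast [hc]; rfl
  have hhall' (A : Finset B) : ∑ j ∈ A, c j ≤ #(nbhd E A) := by
    exact_mod_cast (hc_sum A).trans_le (hhall A)
  have heq' (A : Finset B) :
      #(nbhd E A) = ∑ j ∈ A, c j ↔ ∀ i ∈ nbhd E A, ∀ j, E i j → j ∈ A := by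
    rw [← heq A, ← hc_sum A, Nat.cast_inj]
  have hcard : ∑ j, c j = Fintype.card W := by
    have := (heq' univ).2 fun _ _ j _ => mem_univ j
    rwa [nbhd_univ hwhite, card_univ, eq_comm] at this
  obtain ⟨f, hf⟩ := exists_isAssignment_of_hall E c hcard hhall'
  have hne : (assignments E c).Nonempty := ⟨f, mem_assignments.2 hf⟩
  refine ⟨averagePlan E c,
    fun i j hij => averagePlan_pos (exists_isAssignment_apply_eq hcard hhall' heq' hij),
    sum_averagePlan_row hne, fun j => ?_⟩
  rw [sum_averagePlan_col hne]
  exact_mod_cast hc j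
end

section
/- Let σ₁, σ₂ ∈ S(k) generate a group acting transitively on {1,…,k}, and let 𝒱 be the bipartite graph with vertex set C(σ₁) ⊔ C(σ₂) and an edge between intersecting cycles. Suppose there is an edge e of 𝒱 whose removal disconnects 𝒱 into two components each containing at least one vertex of C(σ₂). Then for every coloring q : C(σ₂) → {2,3,…} there exists a non-trivial subset A ⊂ C(σ₂) (A ≠ ∅, A ≠ C(σ₂)) such that at most ∑_{i∈A}(q(i)−1) cycles of σ₁ intersect ⋃A, or the marriage counting fails; i.e., the triple (σ₁,σ₂,q) never satisfies condition (e) of the main theorem. -/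
/- Cut the bridge `{i, j}` and let `B` be the black vertices on the side of `i`; `j` lies on the
other side. A white cycle `d ≠ i` meeting a black cycle `b` is still adjacent to `b`, so it lies
on the side of `b`. Hence the white cycles meeting `⋃ B` and those meeting `⋃ Bᶜ` overlap
at most in `i`, and together number at most `|C(σ₁)| + 1`. Since `∑ (q - 1) = |C(σ₁)|`, the
strict inequality of condition (e) cannot hold for both `B` and its complement. -/

open Finset Equiv
open scoped Classical

/-- The bipartite graph `𝒱^{σ₁,σ₂}` on `C(σ₁) ⊔ C(σ₂)` with edges between
intersecting cycles; left summands are cycles of `σ₁` (white), right summands are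
cycles of `σ₂` (black). -/
noncomputable def interGraph {k : ℕ} (σ₁ σ₂ : Perm (Fin k)) :
    SimpleGraph (Finset (Fin k) ⊕ Finset (Fin k)) :=
  SimpleGraph.fromRel fun x y =>
    ∃ a b, x = Sum.inl a ∧ y = Sum.inr b ∧
      a ∈ cyclesOf σ₁ ∧ b ∈ cyclesOf σ₂ ∧ (a ∩ b).Nonempty

theorem meetCount_le_card_of_forall {k : ℕ} {σ₁ : Perm (Fin k)} {A W : Finset (Finset (Fin k))}
    (h : ∀ d ∈ cyclesOf σ₁, ∀ b ∈ A, (d ∩ b).Nonempty → d ∈ W) :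
    meetCount σ₁ A ≤ W.card := by
  refine card_le_card fun d hd => ?_
  obtain ⟨hd, x, hx⟩ := mem_filter.mp hd
  obtain ⟨b, hb, hxb⟩ := mem_biUnion.mp (mem_inter.mp hx).2
  exact h d hd b hb ⟨x, mem_inter.mpr ⟨(mem_inter.mp hx).1, hxb⟩⟩

noncomputable abbrev interGraphCut {k : ℕ} (σ₁ σ₂ : Perm (Fin k)) (i j : Finset (Fin k)) :
    SimpleGraph (Finset (Fin k) ⊕ Finset (Fin k)) :=
  (interGraph σ₁ σ₂).deleteEdges {s(Sum.inl i, Sum.inr j)}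

section Bridge

variable {k : ℕ} {σ₁ σ₂ : Perm (Fin k)} {i j : Finset (Fin k)}

theorem interGraphCut_adj {d b : Finset (Fin k)} (hd : d ∈ cyclesOf σ₁)
    (hb : b ∈ cyclesOf σ₂) (hdb : (d ∩ b).Nonempty) (hdi : d ≠ i) :
    (interGraphCut σ₁ σ₂ i j).Adj (Sum.inl d) (Sum.inr b) := by
  refine (SimpleGraph.deleteEdges_adj ..).mpr ⟨?_, ?_⟩
  · exact (SimpleGraph.fromRel_adj ..).mpr ⟨by simp, .inl ⟨d, b, rfl, rfl, hd, hb, hdb⟩⟩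
  · simp [hdi]

theorem reachable_inl_iff_reachable_inr {v : Finset (Fin k) ⊕ Finset (Fin k)}
    {d b : Finset (Fin k)} (hd : d ∈ cyclesOf σ₁) (hb : b ∈ cyclesOf σ₂)
    (hdb : (d ∩ b).Nonempty) (hdi : d ≠ i) :
    (interGraphCut σ₁ σ₂ i j).Reachable v (Sum.inl d) ↔
      (interGraphCut σ₁ σ₂ i j).Reachable v (Sum.inr b) :=
  have hadj := interGraphCut_adj hd hb hdb hdi
  ⟨fun h => h.trans hadj.reachable, fun h => h.trans hadj.symm.reachable⟩

theorem meetCount_reachable_add_meetCount_not_reachable_le (σ₁ σ₂ : Perm (Fin k))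
    (i j : Finset (Fin k)) :
    meetCount σ₁ ((cyclesOf σ₂).filter
        fun b => (interGraphCut σ₁ σ₂ i j).Reachable (Sum.inl i) (Sum.inr b)) +
      meetCount σ₁ ((cyclesOf σ₂).filter
        fun b => ¬ (interGraphCut σ₁ σ₂ i j).Reachable (Sum.inl i) (Sum.inr b)) ≤
      (cyclesOf σ₁).card + 1 := by
  set R := (interGraphCut σ₁ σ₂ i j).Reachable (Sum.inl i)
  set W := (cyclesOf σ₁).filter fun d => R (Sum.inl d)
  set W' := (cyclesOf σ₁).filter fun d => ¬ R (Sum.inl d)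
  have hsame : meetCount σ₁ ((cyclesOf σ₂).filter fun b => R (Sum.inr b)) ≤ W.card := by
    refine meetCount_le_card_of_forall fun d hd b hb hdb => mem_filter.mpr ⟨hd, ?_⟩
    obtain rfl | hdi := eq_or_ne d i
    · rfl
    · have hside : R (Sum.inl d) ↔ R (Sum.inr b) :=
        reachable_inl_iff_reachable_inr hd (mem_filter.mp hb).1 hdb hdi
      exact hside.mpr (mem_filter.mp hb).2
  have hother : meetCount σ₁ ((cyclesOf σ₂).filter fun b => ¬ R (Sum.inr b)) ≤
      (insert i W').card := by
    refine meetCount_le_card_of_forall fun d hd b hb hdb => ?_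
    obtain rfl | hdi := eq_or_ne d i
    · exact mem_insert_self d W'
    · have hside : R (Sum.inl d) ↔ R (Sum.inr b) :=
        reachable_inl_iff_reachable_inr hd (mem_filter.mp hb).1 hdb hdi
      exact mem_insert_of_mem (mem_filter.mpr ⟨hd, mt hside.mp (mem_filter.mp hb).2⟩)
  calc _ ≤ W.card + (insert i W').card := add_le_add hsame hother
    _ ≤ W.card + W'.card + 1 := by grw [card_insert_le, add_assoc]
    _ = (cyclesOf σ₁).card + 1 := by rw [card_filter_add_card_filter_not]

end Bridge

theorem bridge_implies_not_condition_e_general {k : ℕ} (σ₁ σ₂ : Perm (Fin k))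
    (i j : Finset (Fin k)) (hj : j ∈ cyclesOf σ₂)
    (hdisc : ¬ ((interGraph σ₁ σ₂).deleteEdges
        {s(Sum.inl i, Sum.inr j)}).Reachable (Sum.inl i) (Sum.inr j))
    (hblack : ∃ j' ∈ cyclesOf σ₂, ((interGraph σ₁ σ₂).deleteEdges
        {s(Sum.inl i, Sum.inr j)}).Reachable (Sum.inl i) (Sum.inr j'))
    (q : Finset (Fin k) → ℕ)
    (hsum : ∑ c ∈ cyclesOf σ₂, q c = (cyclesOf σ₁).card + (cyclesOf σ₂).card) :
    ∃ A ⊆ cyclesOf σ₂, A.Nonempty ∧ A ≠ cyclesOf σ₂ ∧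
      (meetCount σ₁ A : ℤ) ≤ ∑ c ∈ A, ((q c : ℤ) - 1) := by
  obtain ⟨j', hj', hj'reach⟩ := hblack
  set P := fun b => (interGraphCut σ₁ σ₂ i j).Reachable (Sum.inl i) (Sum.inr b)
  have htotal : ∑ c ∈ cyclesOf σ₂, ((q c : ℤ) - 1) = (cyclesOf σ₁).card := by
    rw [sum_sub_distrib, ← Nat.cast_sum, hsum]
    simp
  have hsplit := sum_filter_add_sum_filter_not (cyclesOf σ₂) P fun c => (q c : ℤ) - 1
  have hmeet : (meetCount σ₁ ((cyclesOf σ₂).filter P) : ℤ) +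
      meetCount σ₁ ((cyclesOf σ₂).filter (¬ P ·)) ≤ (cyclesOf σ₁).card + 1 :=
    mod_cast meetCount_reachable_add_meetCount_not_reachable_le σ₁ σ₂ i j
  by_cases hB : (meetCount σ₁ ((cyclesOf σ₂).filter P) : ℤ) ≤
      ∑ c ∈ (cyclesOf σ₂).filter P, ((q c : ℤ) - 1)
  · refine ⟨_, filter_subset _ _, ⟨j', mem_filter.mpr ⟨hj', hj'reach⟩⟩, fun h => ?_,
      hB⟩
    rw [← h] at hj
    exact hdisc (mem_filter.mp hj).2
  · refine ⟨_, filter_subset _ _, ⟨j, mem_filter.mpr ⟨hj, hdisc⟩⟩, fun h => ?_,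
      by linarith⟩
    rw [← h] at hj'
    exact (mem_filter.mp hj').2 hj'reach

/-- Suppose `σ₁, σ₂ ∈ S(k)` generate a transitive group and the graph `𝒱^{σ₁,σ₂}` has a
disconnecting edge `e = {i, j}` (with `i ∈ C(σ₁)`, `j ∈ C(σ₂)`) whose removal separates
`i` from `j` and whose two resulting components each contain a vertex of `C(σ₂)`. Then for
every coloring `q : C(σ₂) → {2,3,…}` with `∑ q(c) = |C(σ₁)| + |C(σ₂)|` condition (e) fails:
there is a non-trivial `A ⊂ C(σ₂)` such that at most `∑_{i∈A}(q(i)−1)` cycles of `σ₁`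
intersect `⋃A`. -/
theorem bridge_implies_not_condition_e {k : ℕ} (σ₁ σ₂ : Perm (Fin k))
    (htrans : ∀ x y : Fin k,
      ∃ g ∈ Subgroup.closure ({σ₁, σ₂} : Set (Perm (Fin k))), g x = y)
    (i j : Finset (Fin k)) (hi : i ∈ cyclesOf σ₁) (hj : j ∈ cyclesOf σ₂)
    (hedge : (i ∩ j).Nonempty)
    (hdisc : ¬ ((interGraph σ₁ σ₂).deleteEdges
        {s(Sum.inl i, Sum.inr j)}).Reachable (Sum.inl i) (Sum.inr j))
    (hblack : ∃ j' ∈ cyclesOf σ₂, ((interGraph σ₁ σ₂).deleteEdges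
        {s(Sum.inl i, Sum.inr j)}).Reachable (Sum.inl i) (Sum.inr j'))
    (q : Finset (Fin k) → ℕ) (hq : ∀ c ∈ cyclesOf σ₂, 2 ≤ q c)
    (hsum : ∑ c ∈ cyclesOf σ₂, q c = (cyclesOf σ₁).card + (cyclesOf σ₂).card) :
    ∃ A ⊆ cyclesOf σ₂, A.Nonempty ∧ A ≠ cyclesOf σ₂ ∧
      (meetCount σ₁ A : ℤ) ≤ ∑ c ∈ A, ((q c : ℤ) - 1) :=
  bridge_implies_not_condition_e_general σ₁ σ₂ i j hj hdisc hblack q hsum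
end

section
/- Let ν be a compactly supported probability measure on ℝ with Cauchy transform G(z) = ∑_{n≥0} M_n z^{-(n+1)}, log-coefficients S_n defined by log(zG(z)) = ∑_{n≥1} S_n z^{-n}, and free cumulants R_n defined by G^{⟨-1⟩}(z) = 1/z + ∑_{n≥1} R_n z^{n-1}. Then for every n ≥ 1, S_n = ∑_{l≥1} (1/l!) (n−1)_{l−1} ∑_{k₁+⋯+k_l=n, k_i≥1} R_{k₁}⋯R_{k_l}, where (a)_b denotes the falling factorial a(a−1)⋯(a−b+1). -/
/-!
With `w = 1/z` and `g(w) = 1 + ∑ R_k w^k = z G^{⟨-1⟩}(z)`, the inverse relation says `A = g(φ)` for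
`φ = w A`, and `log A` is read off by Lagrange inversion: substituting `w ↦ φ` and multiplying by
the Jacobian `φ' / A^{n+1}` preserves the coefficient of `w^n`, because `φ' / A^{m+1}` has constant
term `1` and, for `m ≥ 1`, equals `B - w B' / m` with `B = A^{-m}`, whose coefficient of `w^m`
vanishes. Applied to `g' g^n` this gives
`(n+1) S_{n+1} = [w^n] A'/A = [w^n] g' g^n = [w^{n+1}] g^{n+1}`; the binomial theorem and
`C(n, l) / n = (n-1)_{l-1} / l!` finish the proof.
-/

open Finset PowerSeries

/-- `compSum R l n = ∑_{k₁+⋯+k_l = n, kᵢ ≥ 1} R_{k₁} ⋯ R_{k_l}`: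
the sum over compositions of `n` into `l` positive parts of products of `R`'s. -/
noncomputable def compSum (R : ℕ → ℝ) (l n : ℕ) : ℝ :=
  ∑ c ∈ (Finset.Nat.antidiagonalTuple l n).filter (fun c => ∀ i, 1 ≤ c i),
    ∏ i, R (c i)

namespace PowerSeries

section CommSemiring

variable {R : Type*} [CommSemiring R]

theorem coeff_X_mul_derivative (f : R⟦X⟧) (n : ℕ) :
    coeff n (X * d⁄dX R f) = n * coeff n f := by
  cases n with
  | zero => simp
  | succ n => rw [coeff_succ_X_mul, coeff_derivative, mul_comm]; push_cast; rfl

theorem coeff_pow_eq_sum_antidiagonalTuple (f : R⟦X⟧) (l n : ℕ) :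
    coeff n (f ^ l) = ∑ c ∈ Nat.antidiagonalTuple l n, ∏ i, coeff (c i) f := by
  rw [← Fin.prod_const, coeff_prod, ← piAntidiag_univ_fin_eq_antidiagonalTuple, finsuppAntidiag,
    sum_map]
  exact sum_attach (piAntidiag univ n) fun c => ∏ i, coeff (c i) f

end CommSemiring

section CommRing

variable {R : Type*} [CommRing R]

theorem HasSubst.X_mul (A : R⟦X⟧) : HasSubst (X * A) :=
  HasSubst.of_constantCoeff_zero' (by simp)

theorem coeff_X_mul_pow_of_lt (A : R⟦X⟧) {m i : ℕ} (h : m < i) : coeff m ((X * A) ^ i) = 0 := by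
  rw [mul_pow, coeff_X_pow_mul', if_neg (by omega)]

theorem coeff_subst_X_mul (A f : R⟦X⟧) (m : ℕ) :
    coeff m (f.subst (X * A)) = ∑ i ∈ range (m + 1), coeff i f * coeff m ((X * A) ^ i) := by
  rw [coeff_subst' (HasSubst.X_mul A), finsum_eq_sum_of_support_subset]
  · rfl
  · intro i hi
    by_contra hi'
    simp only [coe_range, Set.mem_Iio, not_lt] at hi'
    simp [coeff_X_mul_pow_of_lt A (show m < i by omega)] at hi

end CommRing

section Field

variable {K : Type*} [Field K] [CharZero K]

theorem coeff_succ_pow_succ_eq_coeff_derivative_mul_pow (g : K⟦X⟧) (n : ℕ) :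
    coeff (n + 1) (g ^ (n + 1)) = coeff n (d⁄dX K g * g ^ n) := by
  have h := congrArg (coeff n) (derivative_pow g (n + 1))
  rw [coeff_derivative, Nat.add_sub_cancel, ← map_natCast (C (R := K)), mul_assoc, coeff_C_mul,
    mul_comm (g ^ n), mul_comm] at h
  exact mul_left_cancel₀ (Nat.cast_ne_zero.mpr n.succ_ne_zero) (by exact_mod_cast h)

variable {A : K⟦X⟧}

theorem coeff_derivative_X_mul_mul_inv_pow (hA : constantCoeff A ≠ 0) (m : ℕ) :
    coeff m (d⁄dX K (X * A) * A⁻¹ ^ (m + 1)) = if m = 0 then 1 else 0 := by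
  have hAA : A * A⁻¹ = 1 := PowerSeries.mul_inv_cancel A hA
  have hdφ : d⁄dX K (X * A) = A + X * d⁄dX K A := by
    rw [Derivation.leibniz, derivative_X, smul_eq_mul, smul_eq_mul, mul_one, add_comm, mul_comm]
  split_ifs with hm
  · subst hm
    simp [hdφ, hA]
  · have key : (m : K⟦X⟧) * (d⁄dX K (X * A) * A⁻¹ ^ (m + 1)) =
        (m : K⟦X⟧) * A⁻¹ ^ m - X * d⁄dX K (A⁻¹ ^ m) := by
      rw [derivative_pow, derivative_inv', hdφ]
      cases m with
      | zero => simp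
      | succ m =>
        simp only [Nat.add_sub_cancel]
        linear_combination (↑(m + 1) * A⁻¹ ^ (m + 1)) * hAA
    have h := congrArg (coeff m) key
    rw [← map_natCast (C (R := K)), coeff_C_mul, map_sub, coeff_C_mul, coeff_X_mul_derivative,
      sub_self] at h
    exact (mul_eq_zero.mp h).resolve_left (by exact_mod_cast hm)

theorem coeff_X_mul_pow_mul_derivative_mul_inv_pow (hA : constantCoeff A ≠ 0) (i n : ℕ) :
    coeff n ((X * A) ^ i * (d⁄dX K (X * A) * A⁻¹ ^ (n + 1))) = if i = n then 1 else 0 := by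
  rcases lt_or_ge n i with hni | hin
  · rw [mul_pow, mul_assoc, coeff_X_pow_mul', if_neg (by omega), if_neg (by omega)]
  obtain ⟨m, rfl⟩ := Nat.exists_eq_add_of_le hin
  have hAA : A ^ i * A⁻¹ ^ i = 1 := by rw [← mul_pow, PowerSeries.mul_inv_cancel A hA, one_pow]
  have h : (X * A) ^ i * (d⁄dX K (X * A) * A⁻¹ ^ (i + m + 1)) =
      X ^ i * (d⁄dX K (X * A) * A⁻¹ ^ (m + 1)) := by
    linear_combination (X ^ i * d⁄dX K (X * A) * A⁻¹ ^ (m + 1)) * hAA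
  rw [h, add_comm i m, coeff_X_pow_mul, coeff_derivative_X_mul_mul_inv_pow hA]
  simp

theorem coeff_subst_X_mul_mul_derivative_mul_inv_pow (hA : constantCoeff A ≠ 0) (f : K⟦X⟧)
    (n : ℕ) :
    coeff n (f.subst (X * A) * (d⁄dX K (X * A) * A⁻¹ ^ (n + 1))) = coeff n f := by
  have hφ := HasSubst.X_mul A
  set Q := d⁄dX K (X * A) * A⁻¹ ^ (n + 1)
  have htail :
      coeff n ((X ^ (n + 1) * mk fun i ↦ coeff (i + (n + 1)) f).subst (X * A) * Q) = 0 := by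
    rw [subst_mul hφ, subst_pow hφ, subst_X hφ, mul_pow, mul_assoc, mul_assoc, coeff_X_pow_mul',
      if_neg (by omega)]
  have hhead : coeff n ((trunc (n + 1) f : K⟦X⟧).subst (X * A) * Q) = coeff n f := by
    rw [subst_coe hφ, Polynomial.aeval_def, eval₂_trunc_eq_sum_range, sum_mul, map_sum]
    trans ∑ i ∈ range (n + 1), coeff i f * if i = n then 1 else 0
    · refine sum_congr rfl fun i _ => ?_
      rw [mul_assoc, ← coeff_X_mul_pow_mul_derivative_mul_inv_pow hA i n]
      exact coeff_C_mul _ _ _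
    · simp
  nth_rw 1 [eq_X_pow_mul_shift_add_trunc (n + 1) f]
  rw [subst_add hφ, add_mul, map_add, htail, hhead, zero_add]

theorem coeff_derivative_mul_inv_of_eq_subst {g : K⟦X⟧} (hA : constantCoeff A ≠ 0)
    (h : A = g.subst (X * A)) (n : ℕ) :
    coeff n (d⁄dX K A * A⁻¹) = coeff (n + 1) (g ^ (n + 1)) := by
  have hφ := HasSubst.X_mul A
  have hchain : d⁄dX K A = (d⁄dX K g).subst (X * A) * d⁄dX K (X * A) := by
    conv_lhs => rw [h]
    exact derivative_subst hφ
  have hAA : A ^ n * A⁻¹ ^ n = 1 := by rw [← mul_pow, PowerSeries.mul_inv_cancel A hA, one_pow]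
  rw [coeff_succ_pow_succ_eq_coeff_derivative_mul_pow,
    ← coeff_subst_X_mul_mul_derivative_mul_inv_pow hA (d⁄dX K g * g ^ n), subst_mul hφ,
    subst_pow hφ, ← h]
  congr 1
  linear_combination A⁻¹ * hchain - ((d⁄dX K g).subst (X * A) * d⁄dX K (X * A) * A⁻¹) * hAA

end Field

end PowerSeries

section Cumulants

variable {𝕜 : Type*} [CommRing 𝕜]

noncomputable def cumulantSeries (R : ℕ → 𝕜) : 𝕜⟦X⟧ :=
  mk fun k => if k = 0 then 0 else R k

theorem eq_subst_one_add_cumulantSeries {A : 𝕜⟦X⟧} {R : ℕ → 𝕜}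
    (hR : ∀ m : ℕ, coeff m A =
      (if m = 0 then 1 else 0) + ∑ n ∈ Icc 1 m, R n * coeff m ((X * A) ^ n)) :
    A = (1 + cumulantSeries R).subst (X * A) := by
  ext m
  rw [hR m, coeff_subst_X_mul, sum_range_succ', ← Ico_add_one_right_eq_Icc, sum_Ico_eq_sum_range]
  simp [cumulantSeries, coeff_one, add_comm]

end Cumulants

theorem compSum_eq_coeff_pow (R : ℕ → ℝ) (l n : ℕ) :
    compSum R l n = coeff n (cumulantSeries R ^ l) := by
  rw [compSum, coeff_pow_eq_sum_antidiagonalTuple, sum_filter]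
  refine sum_congr rfl fun c _ => ?_
  split_ifs with hc
  · exact prod_congr rfl fun i _ => by
      rw [cumulantSeries, coeff_mk, if_neg (Nat.one_le_iff_ne_zero.mp (hc i))]
  · obtain ⟨i, hi⟩ := not_forall.mp hc
    refine (prod_eq_zero (mem_univ i) ?_).symm
    rw [cumulantSeries, coeff_mk, if_pos (by omega)]

theorem coeff_one_add_cumulantSeries_pow (R : ℕ → ℝ) {n : ℕ} (hn : n ≠ 0) :
    coeff n ((1 + cumulantSeries R) ^ n) = ∑ l ∈ Icc 1 n, (n.choose l : ℝ) * compSum R l n := by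
  have hterm (l : ℕ) : coeff n (cumulantSeries R ^ l * 1 ^ (n - l) * (n.choose l : ℝ⟦X⟧)) =
      n.choose l * compSum R l n := by
    rw [one_pow, mul_one, ← map_natCast (C (R := ℝ)), coeff_mul_C, compSum_eq_coeff_pow, mul_comm]
  have hzero : compSum R 0 n = 0 := by rw [compSum_eq_coeff_pow, pow_zero, coeff_one, if_neg hn]
  rw [add_comm, add_pow, map_sum, range_eq_Ico, sum_eq_sum_Ico_succ_bot n.succ_pos, zero_add,
    Nat.succ_eq_add_one, Ico_add_one_right_eq_Icc]
  simp only [hterm, hzero, mul_zero, zero_add]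

theorem Nat.cast_choose_succ_eq_mul_descFactorial_div {K : Type*} [Field K] [CharZero K]
    {n l : ℕ} (hl : 1 ≤ l) :
    ((n + 1).choose l : K) = (n + 1) * (n.descFactorial (l - 1) / l.factorial) := by
  obtain ⟨k, rfl⟩ := Nat.exists_eq_add_of_le' hl
  have h := (Nat.succ_descFactorial_succ n k).symm.trans
    (Nat.descFactorial_eq_factorial_mul_choose (n + 1) (k + 1))
  rw [Nat.add_sub_cancel, mul_div_assoc',
    eq_div_iff (Nat.cast_ne_zero.mpr (Nat.factorial_ne_zero _))]
  exact_mod_cast (h.trans (mul_comm _ _)).symm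

/-- Here `A(w) = z·G(z)` (with `w = 1/z`) is a formal power series with constant term `1`; the
free cumulants `R_n` are encoded by the compositional inverse relation
`A = 1 + ∑_{n≥1} R_n (w·A)^n` (equivalent to `G^{⟨-1⟩}(z) = 1/z + ∑ R_n z^{n-1}`), and the
coefficients `S_n` of `log(z·G(z)) = ∑ S_n w^n` by the logarithmic-derivative relation
`A' = A · (∑_{n≥1} S_n w^n)'`. -/
theorem S_in_terms_of_R (A : PowerSeries ℝ) (R S : ℕ → ℝ)
    (hA0 : coeff 0 A = 1)
    (hR : ∀ m : ℕ, coeff m A =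
      (if m = 0 then 1 else 0) +
        ∑ n ∈ Finset.Icc 1 m, R n * coeff m ((X * A) ^ n))
    (hS : ∀ m : ℕ, ((m : ℝ) + 1) * coeff (m + 1) A =
      coeff m (A * PowerSeries.mk fun n => ((n : ℝ) + 1) * S (n + 1))) :
    ∀ n : ℕ, 1 ≤ n →
      S n = ∑ l ∈ Finset.Icc 1 n,
        (((n - 1).descFactorial (l - 1) : ℝ) / (Nat.factorial l)) * compSum R l n := by
  intro n hn
  obtain ⟨p, rfl⟩ := Nat.exists_eq_add_of_le' hn
  have hA : constantCoeff A ≠ 0 := by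
    rw [← coeff_zero_eq_constantCoeff_apply, hA0]
    exact one_ne_zero
  have hlog : d⁄dX ℝ A * A⁻¹ = mk fun n => ((n : ℝ) + 1) * S (n + 1) := by
    have hderiv : d⁄dX ℝ A = A * mk fun n => ((n : ℝ) + 1) * S (n + 1) := by
      ext m
      rw [coeff_derivative, ← hS m, mul_comm]
    rw [hderiv, mul_right_comm, PowerSeries.mul_inv_cancel A hA, one_mul]
  have key := coeff_derivative_mul_inv_of_eq_subst hA (eq_subst_one_add_cumulantSeries hR) p
  rw [hlog, coeff_mk, coeff_one_add_cumulantSeries_pow R p.succ_ne_zero] at key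
  rw [Nat.add_sub_cancel]
  refine mul_left_cancel₀ (by positivity : (p : ℝ) + 1 ≠ 0) (key.trans ?_)
  rw [mul_sum]
  refine sum_congr rfl fun l hl => ?_
  rw [Nat.cast_choose_succ_eq_mul_descFactorial_div (mem_Icc.mp hl).1, mul_assoc]
end

section
/- In the toy case of quadratic terms: for any polynomial function 𝓕 expressed as a polynomial in variables S₂, S₃, …, substituting S_n = ∑_{l≥1}(1/l!)(n−1)_{l−1} ∑_{k₁+⋯+k_l=n} R_{k₁}⋯R_{k_l} yields, for integers l₁, l₂ ≥ 2: (∂²𝓕/∂R_{l₁}∂R_{l₂})|_{R=0} = (∂²𝓕/∂S_{l₁}∂S_{l₂})|_{S=0} + (l₁+l₂−1)·(∂𝓕/∂S_{l₁+l₂})|_{S=0}. -/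
/-!
The `l`-th summand of `S_n` is homogeneous of degree `l`, so at the origin only `l = 1` and
`l = 2` survive one or two derivatives: `S_n` has no constant term, linear part `R_n` (for
`n ≥ 2`) and quadratic part `(n-1)/2 · ∑_{k₁+k₂=n} R_{k₁} R_{k₂}`. By the second-order chain rule
at the origin, the linear parts reproduce `∂²𝓕/∂S_{l₁}∂S_{l₂}`, while the quadratic part of
`S_{l₁+l₂}` contributes `(l₁+l₂-1) · ∂𝓕/∂S_{l₁+l₂}`.
-/

open Finset MvPolynomial

/-- The expansion of the functional `S_n` in the free cumulants:
`S_n = ∑_{l≥1} (1/l!) (n−1)_{l−1} ∑_{k₁+⋯+k_l=n, kᵢ≥2} R_{k₁}⋯R_{k_l}`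
(terms with some `kᵢ = 1` vanish since `R₁ = 0`); variable `k` of the polynomial
ring is `R_k`. -/
noncomputable def subS (n : ℕ) : MvPolynomial ℕ ℚ :=
  ∑ l ∈ Finset.Icc 1 n,
    C (((n - 1).descFactorial (l - 1) : ℚ) / (Nat.factorial l)) *
      ∑ c ∈ (Finset.Nat.antidiagonalTuple l n).filter (fun c => ∀ i, 2 ≤ c i),
        ∏ i, X (c i)

namespace MvPolynomial

variable {R σ τ : Type*} [CommSemiring R]

theorem IsHomogeneous.constantCoeff_eq_zero {p : MvPolynomial σ R} {n : ℕ}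
    (hp : p.IsHomogeneous n) (hn : n ≠ 0) : constantCoeff p = 0 := by
  rw [constantCoeff_eq]
  exact hp.coeff_eq_zero (by simpa using hn.symm)

theorem pderiv_pderiv_X (i j s : σ) : pderiv i (pderiv j (X s : MvPolynomial σ R)) = 0 := by
  classical
  rw [pderiv_X, Pi.single_apply]
  split_ifs <;> simp

theorem constantCoeff_pderiv_X [DecidableEq σ] (i s : σ) :
    constantCoeff (pderiv i (X s : MvPolynomial σ R)) = (Pi.single i 1 : σ → R) s := by
  rw [pderiv_X, Pi.single_apply, Pi.single_apply]
  split_ifs <;> simp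

theorem constantCoeff_pderiv_pderiv_X_mul_X [DecidableEq σ] (i j s t : σ) :
    constantCoeff (pderiv i (pderiv j (X s * X t : MvPolynomial σ R))) =
      (Pi.single j 1 : σ → R) s * (Pi.single i 1 : σ → R) t +
        (Pi.single i 1 : σ → R) s * (Pi.single j 1 : σ → R) t := by
  simp only [pderiv_mul, map_add, map_mul, pderiv_pderiv_X, constantCoeff_X,
    constantCoeff_pderiv_X]
  ring

section ChainRule

variable {g : σ → MvPolynomial τ R}

theorem constantCoeff_aeval (hg : ∀ s, constantCoeff (g s) = 0) (F : MvPolynomial σ R) :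
    constantCoeff (aeval g F) = constantCoeff F := by
  induction F using MvPolynomial.induction_on with
  | C r => simp
  | add p q hp hq => simp only [map_add, hp, hq]
  | mul_X p s hp => simp only [map_mul, hp, aeval_X, hg, constantCoeff_X]

variable [DecidableEq σ]

theorem constantCoeff_pderiv_aeval (hg : ∀ s, constantCoeff (g s) = 0) {a : τ} {i : σ}
    (ha : ∀ s, constantCoeff (pderiv a (g s)) = (Pi.single i 1 : σ → R) s)
    (F : MvPolynomial σ R) :
    constantCoeff (pderiv a (aeval g F)) = constantCoeff (pderiv i F) := by
  induction F using MvPolynomial.induction_on with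
  | C r => simp
  | add p q hp hq => simp only [map_add, hp, hq]
  | mul_X p s hp =>
    simp only [map_mul, aeval_X, pderiv_mul, map_add, hg, ha, constantCoeff_aeval hg,
      constantCoeff_pderiv_X, constantCoeff_X, mul_zero, zero_add]

theorem constantCoeff_pderiv_pderiv_aeval (hg : ∀ s, constantCoeff (g s) = 0) {a b : τ}
    {i j m : σ} {c : R}
    (ha : ∀ s, constantCoeff (pderiv a (g s)) = (Pi.single i 1 : σ → R) s)
    (hb : ∀ s, constantCoeff (pderiv b (g s)) = (Pi.single j 1 : σ → R) s)
    (hab : ∀ s, constantCoeff (pderiv a (pderiv b (g s))) = (Pi.single m c : σ → R) s)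
    (F : MvPolynomial σ R) :
    constantCoeff (pderiv a (pderiv b (aeval g F))) =
      constantCoeff (pderiv i (pderiv j F)) + c * constantCoeff (pderiv m F) := by
  induction F using MvPolynomial.induction_on with
  | C r => simp
  | add p q hp hq =>
    simp only [map_add, hp, hq]
    ring
  | mul_X p s hp =>
    simp only [map_mul, aeval_X, pderiv_mul, map_add, hg, ha, hb, hab, constantCoeff_aeval hg,
      constantCoeff_pderiv_aeval hg ha, constantCoeff_pderiv_aeval hg hb, pderiv_pderiv_X,
      constantCoeff_pderiv_X, constantCoeff_X, map_zero, Pi.single_apply]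
    split_ifs <;> ring

end ChainRule

end MvPolynomial

noncomputable def compositionSum (l n : ℕ) : MvPolynomial ℕ ℚ :=
  ∑ c ∈ (Finset.Nat.antidiagonalTuple l n).filter (fun c => ∀ i, 2 ≤ c i), ∏ i, X (c i)

theorem subS_eq_sum_compositionSum (n : ℕ) :
    subS n = ∑ l ∈ Icc 1 n,
      C (((n - 1).descFactorial (l - 1) : ℚ) / l.factorial) * compositionSum l n :=
  rfl

theorem isHomogeneous_compositionSum (l n : ℕ) : (compositionSum l n).IsHomogeneous l :=
  IsHomogeneous.sum _ _ _ fun c _ => by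
    simpa using IsHomogeneous.prod univ _ (fun _ => 1) fun i _ => isHomogeneous_X ℚ (c i)

theorem compositionSum_one (n : ℕ) : compositionSum 1 n = if 2 ≤ n then X n else 0 := by
  simp only [compositionSum, Finset.Nat.antidiagonalTuple_one, Finset.filter_singleton]
  split_ifs <;> simp_all

theorem constantCoeff_pderiv_compositionSum_one {k : ℕ} (hk : 2 ≤ k) (n : ℕ) :
    constantCoeff (pderiv k (compositionSum 1 n)) = (Pi.single k 1 : ℕ → ℚ) n := by
  rw [compositionSum_one]
  split_ifs with hn
  · exact constantCoeff_pderiv_X k n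
  · rw [map_zero, map_zero, Pi.single_eq_of_ne (by omega)]

theorem constantCoeff_pderiv_pderiv_compositionSum_two {a b : ℕ} (ha : 2 ≤ a) (hb : 2 ≤ b)
    (n : ℕ) :
    constantCoeff (pderiv a (pderiv b (compositionSum 2 n))) = if a + b = n then 2 else 0 := by
  have hterm : ∀ c : Fin 2 → ℕ,
      constantCoeff (pderiv a (pderiv b (∏ i, X (c i) : MvPolynomial ℕ ℚ))) =
        (if c = ![b, a] then 1 else 0) + (if c = ![a, b] then 1 else 0) := by
    intro c
    rw [Fin.prod_univ_two, constantCoeff_pderiv_pderiv_X_mul_X]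
    simp only [Pi.single_apply, funext_iff, Fin.forall_fin_two]
    split_ifs <;> simp_all
  simp only [compositionSum, map_sum, hterm, sum_add_distrib, sum_ite_eq', mem_filter,
    Nat.mem_antidiagonalTuple, Fin.sum_univ_two, Fin.forall_fin_two, Matrix.cons_val_zero,
    Matrix.cons_val_one, ha, hb, and_self, and_true, add_comm b a]
  split_ifs <;> norm_num

theorem constantCoeff_subS (n : ℕ) : constantCoeff (subS n) = 0 := by
  rw [subS_eq_sum_compositionSum, map_sum]
  refine sum_eq_zero fun l hl => ?_
  have hl1 := (mem_Icc.mp hl).1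
  rw [map_mul, (isHomogeneous_compositionSum l n).constantCoeff_eq_zero (by omega), mul_zero]

theorem constantCoeff_pderiv_subS {k : ℕ} (hk : 2 ≤ k) (n : ℕ) :
    constantCoeff (pderiv k (subS n)) = (Pi.single k 1 : ℕ → ℚ) n := by
  rw [subS_eq_sum_compositionSum, map_sum, map_sum, sum_eq_single 1]
  · simp [constantCoeff_pderiv_compositionSum_one hk]
  · intro l hl hl1
    rw [pderiv_C_mul, map_mul, (isHomogeneous_compositionSum l n).pderiv.constantCoeff_eq_zero
      (by have := mem_Icc.mp hl; omega), mul_zero]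
  · intro h
    obtain rfl : n = 0 := by simpa using h
    simp [compositionSum_one]

theorem constantCoeff_pderiv_pderiv_subS {a b : ℕ} (ha : 2 ≤ a) (hb : 2 ≤ b) (n : ℕ) :
    constantCoeff (pderiv a (pderiv b (subS n))) =
      (Pi.single (a + b) ((a : ℚ) + b - 1) : ℕ → ℚ) n := by
  rw [subS_eq_sum_compositionSum, map_sum, map_sum, map_sum, sum_eq_single 2]
  · rw [pderiv_C_mul, pderiv_C_mul, map_mul, constantCoeff_C,
      constantCoeff_pderiv_pderiv_compositionSum_two ha hb, Pi.single_apply]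
    obtain rfl | hn := eq_or_ne n (a + b)
    · simp [Nat.cast_sub (show 1 ≤ a + b by omega)]
    · simp [hn, Ne.symm hn]
  · intro l hl hl2
    rw [pderiv_C_mul, pderiv_C_mul, map_mul]
    obtain rfl | hl3 : l = 1 ∨ 3 ≤ l := by have := mem_Icc.mp hl; omega
    · rw [compositionSum_one]
      split_ifs <;> simp only [pderiv_pderiv_X, map_zero, mul_zero]
    · rw [(isHomogeneous_compositionSum l n).pderiv.pderiv.constantCoeff_eq_zero (by omega),
        mul_zero]
  · intro h
    rw [pderiv_C_mul, pderiv_C_mul, map_mul, constantCoeff_pderiv_pderiv_compositionSum_two ha hb,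
      if_neg (by rw [mem_Icc] at h; omega), mul_zero]

/-- Let `𝓕` be a polynomial in the variables `S₂, S₃, …`. Substituting
`S_n = ∑_{l≥1}(1/l!)(n−1)_{l−1} ∑_{k₁+⋯+k_l=n} R_{k₁}⋯R_{k_l}` yields, for `l₁, l₂ ≥ 2`:
`(∂²𝓕/∂R_{l₁}∂R_{l₂})|₀ = (∂²𝓕/∂S_{l₁}∂S_{l₂})|₀ + (l₁+l₂−1)·(∂𝓕/∂S_{l₁+l₂})|₀`. -/
theorem second_derivative_substitution (F : MvPolynomial ℕ ℚ)
    (l₁ l₂ : ℕ) (h₁ : 2 ≤ l₁) (h₂ : 2 ≤ l₂) :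
    eval (fun _ => (0 : ℚ)) (pderiv l₁ (pderiv l₂ (aeval subS F))) =
      eval (fun _ => (0 : ℚ)) (pderiv l₁ (pderiv l₂ F)) +
        ((l₁ : ℚ) + l₂ - 1) * eval (fun _ => (0 : ℚ)) (pderiv (l₁ + l₂) F) := by
  simp only [eval_zero']
  exact constantCoeff_pderiv_pderiv_aeval constantCoeff_subS (constantCoeff_pderiv_subS h₁)
    (constantCoeff_pderiv_subS h₂) (constantCoeff_pderiv_pderiv_subS h₁ h₂) F
end
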